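/- Let S be a K3 surface with quasi-polarization L of genus g, and suppose the Picard lattice of S contains a class M with M² = n ≥ 0, n even, and L·M = d satisfying √(2(g-1)n) < d ≤ (n+2)/2 + g - (2g+2)/(n+4) and d ≤ g-1. Then (n/2 + 2)·((2g-2-2d+n)/2 + 2) ≥ g + 1. -/

import Mathlib

theorem stmt5_general (g d n : ℤ) (hn0 : 0 ≤ n)
    (h2 : (d : ℚ) ≤ ((n : ℚ) + 2)/2 + g - (2*(g : ℚ) + 2)/((n : ℚ) + 4)) :
    ((n : ℚ)/2 + 2) * ((2*(g : ℚ) - 2 - 2*d + n)/2 + 2) ≥ (g : ℚ) + 1 := by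
  have hpos : (0 : ℚ) < n + 4 := by positivity
  -- The left side is `(n + 4)/2 · ((n + 2)/2 + g - d)`, so `h2` is the claim divided by `(n + 4)/2`.
  have key : 2 * (g : ℚ) + 2 ≤ ((n + 2)/2 + g - d) * (n + 4) :=
    (div_le_iff₀ hpos).1 (by linarith)
  linear_combination key / 2

/-- Converse direction of Lemma 1.6: if a class `M` in the Picard lattice of a
quasi-polarized genus `g` K3 surface has `M² = n ≥ 0` even, `L·M = d` with
`√(2(g-1)n) < d ≤ (n+2)/2 + g - (2g+2)/(n+4)` and `d ≤ g-1`, then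
`(n/2 + 2)·((2g-2-2d+n)/2 + 2) ≥ g + 1` (so `h⁰(M)h⁰(L-M) ≥ h⁰(L)` and the
surface is not Brill-Noether general). -/
theorem stmt5 (g d n : ℤ) (hg : 2 ≤ g) (hne : Even n) (hn0 : 0 ≤ n)
    (h1 : Real.sqrt (2 * ((g : ℝ) - 1) * n) < (d : ℝ))
    (h2 : (d : ℚ) ≤ ((n : ℚ) + 2)/2 + g - (2*(g : ℚ) + 2)/((n : ℚ) + 4))
    (h3 : (d : ℚ) ≤ (g : ℚ) - 1) :
    ((n : ℚ)/2 + 2) * ((2*(g : ℚ) - 2 - 2*d + n)/2 + 2) ≥ (g : ℚ) + 1 :=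
  stmt5_general g d n hn0 h2
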